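/- arXiv:1906.02120 — 2 statements merged into one kernel-verified Lean document; each statement's English description precedes it below -/
import Mathlib

section
/- Stationarity of the targeted regularization objective in ε implies the non-parametric estimating equation: fix functions Q̂: {0,1}×𝒳 → ℝ and ĝ: 𝒳 → (0,1), data points (yᵢ, tᵢ, xᵢ) for i = 1,…,n, and define H(t,x) = t/ĝ(x) − (1−t)/(1−ĝ(x)), Q̃_ε(t,x) = Q̂(t,x) + ε·H(t,x), L(ε) = (1/n)Σᵢ (yᵢ − Q̃_ε(tᵢ,xᵢ))², and ψ(ε) = (1/n)Σᵢ (Q̃_ε(1,xᵢ) − Q̃_ε(0,xᵢ)). If L′(ε̂) = 0, then (1/n)Σᵢ φ(yᵢ,tᵢ,xᵢ; Q̃_{ε̂}, ĝ, ψ(ε̂)) = 0, where φ(y,t,x;Q,g,ψ) = Q(1,x) − Q(0,x) + H(t,x)(y − Q(t,x)) − ψ. -/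
/-!
The objective is a least-squares criterion in `ε`, so `L'(ε) = -2 · (1/n) Σᵢ H(tᵢ,xᵢ)(yᵢ - Q̃_ε(tᵢ,xᵢ))`:
stationarity says exactly that the weighted residual term of `φ` averages to zero. The remaining
terms of `φ` are `Q̃(1,xᵢ) - Q̃(0,xᵢ) - ψ`, which average to zero because `ψ` is their mean.
-/

open Finset

theorem hasDerivAt_sum_sq_sub_mul {ι : Type*} (s : Finset ι) (a b : ι → ℝ) (ε : ℝ) :
    HasDerivAt (fun e => ∑ i ∈ s, (a i - e * b i) ^ 2)
      (-2 * ∑ i ∈ s, b i * (a i - ε * b i)) ε := by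
  rw [mul_sum]
  refine HasDerivAt.fun_sum fun i _ => ?_
  have hres : HasDerivAt (fun e => a i - e * b i) (-b i) ε := by
    simpa using ((hasDerivAt_id ε).mul_const (b i)).const_sub (a i)
  exact (hres.fun_pow 2).congr_deriv (by push_cast; ring)

theorem mean_add_sub_mean {ι : Type*} [Fintype ι] (u v : ι → ℝ) :
    (1 / Fintype.card ι : ℝ) * ∑ i, (u i + v i - (1 / Fintype.card ι : ℝ) * ∑ j, u j)
      = (1 / Fintype.card ι : ℝ) * ∑ i, v i := by
  rw [sum_sub_distrib, sum_add_distrib, sum_const, card_univ, nsmul_eq_mul]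
  rcases eq_or_ne (Fintype.card ι : ℝ) 0 with hcard | hcard
  · simp [hcard]
  · field_simp
    ring

theorem treg_stationarity_implies_npee_general {𝒳 : Type*} (n : ℕ)
    (y : Fin n → ℝ) (t : Fin n → ℝ) (x : Fin n → 𝒳)
    (Qhat : ℝ → 𝒳 → ℝ)
    (H : ℝ → 𝒳 → ℝ)
    (Qtil : ℝ → ℝ → 𝒳 → ℝ)
    (hQtil : ∀ ε s z, Qtil ε s z = Qhat s z + ε * H s z)
    (L : ℝ → ℝ)
    (hL : ∀ ε, L ε = (1 / n) * ∑ i, (y i - Qtil ε (t i) (x i)) ^ 2)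
    (ψ : ℝ → ℝ)
    (hψ : ∀ ε, ψ ε = (1 / n) * ∑ i, (Qtil ε 1 (x i) - Qtil ε 0 (x i)))
    (φ : ℝ → ℝ → 𝒳 → (ℝ → 𝒳 → ℝ) → ℝ → ℝ)
    (hφ : ∀ a s z Q p, φ a s z Q p = Q 1 z - Q 0 z + H s z * (a - Q s z) - p)
    (εhat : ℝ) (hstat : HasDerivAt L 0 εhat) :
    (1 / n) * ∑ i, φ (y i) (t i) (x i) (Qtil εhat) (ψ εhat) = 0 := by
  have hL_eq : L = fun e => (1 / n : ℝ) * ∑ i, (y i - Qhat (t i) (x i) - e * H (t i) (x i)) ^ 2 := by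
    funext e
    simp only [hL, hQtil, sub_add_eq_sub_sub]
  have hderiv := (hasDerivAt_sum_sq_sub_mul univ (fun i => y i - Qhat (t i) (x i))
    (fun i => H (t i) (x i)) εhat).const_mul (1 / n : ℝ)
  rw [← hL_eq] at hderiv
  have hresidual : (1 / n : ℝ) * ∑ i, H (t i) (x i) * (y i - Qtil εhat (t i) (x i)) = 0 := by
    have := hderiv.unique hstat
    simp only [hQtil, sub_add_eq_sub_sub] at this ⊢
    linarith
  simpa only [hφ, hψ, Fintype.card_fin, hresidual] using
    mean_add_sub_mean (fun i => Qtil εhat 1 (x i) - Qtil εhat 0 (x i))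
      (fun i => H (t i) (x i) * (y i - Qtil εhat (t i) (x i)))

/-- stationarity of the targeted-regularization objective in ε implies the
non-parametric estimating equation for the perturbed outcome model. -/
theorem treg_stationarity_implies_npee {𝒳 : Type*} (n : ℕ) (hn : 0 < n)
    (y : Fin n → ℝ) (t : Fin n → ℝ) (x : Fin n → 𝒳)
    (ht : ∀ i, t i = 0 ∨ t i = 1)
    (Qhat : ℝ → 𝒳 → ℝ) (ghat : 𝒳 → ℝ)
    (hg : ∀ i, 0 < ghat (x i) ∧ ghat (x i) < 1)
    (H : ℝ → 𝒳 → ℝ)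
    (hH : ∀ s z, H s z = s / ghat z - (1 - s) / (1 - ghat z))
    (Qtil : ℝ → ℝ → 𝒳 → ℝ)
    (hQtil : ∀ ε s z, Qtil ε s z = Qhat s z + ε * H s z)
    (L : ℝ → ℝ)
    (hL : ∀ ε, L ε = (1 / n) * ∑ i, (y i - Qtil ε (t i) (x i)) ^ 2)
    (ψ : ℝ → ℝ)
    (hψ : ∀ ε, ψ ε = (1 / n) * ∑ i, (Qtil ε 1 (x i) - Qtil ε 0 (x i)))
    (φ : ℝ → ℝ → 𝒳 → (ℝ → 𝒳 → ℝ) → ℝ → ℝ)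
    (hφ : ∀ a s z Q p, φ a s z Q p = Q 1 z - Q 0 z + H s z * (a - Q s z) - p)
    (εhat : ℝ) (hstat : HasDerivAt L 0 εhat) :
    (1 / n) * ∑ i, φ (y i) (t i) (x i) (Qtil εhat) (ψ εhat) = 0 :=
  treg_stationarity_implies_npee_general n y t x Qhat H Qtil hQtil L hL ψ hψ φ hφ εhat hstat
end

section
/- Conditional ignorability given X implies conditional ignorability given the propensity score: if E[Y(1) | X, T] = E[Y(1) | X] and E[Y(0) | X, T] = E[Y(0) | X] (mean ignorability), and 0 < g(X) < 1 a.s. with g(x) = P(T=1|X=x), then E[Y(1) | g(X), T] = E[Y(1) | g(X)] and E[Y(0) | g(X), T] = E[Y(0) | g(X)]. -/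
/-!
Write `Z = E[Y | X]` and `W = E[Z | g(X)]`. Because `g(X) = E[T | X]` is `σ(g(X))`-measurable,
`E[Z T | g(X)] = E[Z g(X) | g(X)] = W g(X) = E[W T | g(X)]`, so `Z - W` integrates to zero
against both `1` and `T` over every `σ(g(X))`-set. As `T` only takes the values `0` and `1`, the
indicator of `{T ∈ B}` is an affine function of `T`; hence `Z - W` integrates to zero over the
sets `S ∩ {T ∈ B}` with `S ∈ σ(g(X))`, a π-system generating `σ(g(X), T)`, and so
`W = E[Z | g(X), T]`. Finally
`E[Y | g(X), T] = E[E[Y | X, T] | g(X), T] = E[Z | g(X), T] = W = E[Y | g(X)]`.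
-/

open MeasureTheory MeasurableSpace Set

section

variable {Ω : Type*}

theorem MeasurableSpace.sup_eq_generateFrom_inter (m₁ m₂ : MeasurableSpace Ω) :
    m₁ ⊔ m₂ = generateFrom
      {s | ∃ t u, MeasurableSet[m₁] t ∧ MeasurableSet[m₂] u ∧ t ∩ u = s} := by
  refine le_antisymm (sup_le ?_ ?_) (generateFrom_le ?_)
  · exact fun t ht ↦ measurableSet_generateFrom ⟨t, univ, ht, .univ, inter_univ t⟩
  · exact fun u hu ↦ measurableSet_generateFrom ⟨univ, u, .univ, hu, univ_inter u⟩
  · rintro _ ⟨t, u, ht, hu, rfl⟩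
    exact (le_sup_left (a := m₁) t ht).inter (le_sup_right (b := m₂) u hu)

theorem MeasurableSpace.isPiSystem_inter (m₁ m₂ : MeasurableSpace Ω) :
    IsPiSystem {s | ∃ t u, MeasurableSet[m₁] t ∧ MeasurableSet[m₂] u ∧ t ∩ u = s} := by
  rintro _ ⟨t, u, ht, hu, rfl⟩ _ ⟨t', u', ht', hu', rfl⟩ -
  exact ⟨t ∩ t', u ∩ u', ht.inter ht', hu.inter hu', inter_inter_inter_comm t t' u u'⟩

theorem MeasureTheory.setIntegral_eq_of_isPiSystem {E : Type*} [NormedAddCommGroup E]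
    [NormedSpace ℝ E] {m m₀ : MeasurableSpace Ω} {μ : Measure Ω} (hm : m ≤ m₀)
    {C : Set (Set Ω)} (hgen : m = generateFrom C) (hC : IsPiSystem C) {f g : Ω → E}
    (hf : Integrable f μ) (hg : Integrable g μ) (huniv : ∫ ω, f ω ∂μ = ∫ ω, g ω ∂μ)
    (hbasic : ∀ s ∈ C, ∫ ω in s, f ω ∂μ = ∫ ω in s, g ω ∂μ) {s : Set Ω}
    (hs : MeasurableSet[m] s) : ∫ ω in s, f ω ∂μ = ∫ ω in s, g ω ∂μ := by
  induction s, hs using MeasurableSpace.induction_on_inter hgen hC with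
  | empty => simp
  | basic t ht => exact hbasic t ht
  | compl t ht iht =>
    rw [setIntegral_compl (hm t ht) hf, setIntegral_compl (hm t ht) hg, iht, huniv]
  | iUnion t htd htm iht =>
    rw [integral_iUnion (fun i ↦ hm _ (htm i)) htd hf.integrableOn,
      integral_iUnion (fun i ↦ hm _ (htm i)) htd hg.integrableOn]
    exact tsum_congr iht

section Binary

variable {m₀ : MeasurableSpace Ω} {μ : Measure Ω} {T : Ω → ℝ}

theorem abs_le_one_of_eq_zero_or_eq_one {t : ℝ} (ht : t = 0 ∨ t = 1) : |t| ≤ 1 := by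
  rcases ht with rfl | rfl <;> simp

theorem integrable_mul_of_eq_zero_or_eq_one {f : Ω → ℝ} (hf : Integrable f μ)
    (hT : Measurable T) (hTbin : ∀ ω, T ω = 0 ∨ T ω = 1) : Integrable (f * T) μ :=
  hf.mul_bdd hT.aestronglyMeasurable
    (ae_of_all _ fun ω ↦ abs_le_one_of_eq_zero_or_eq_one (hTbin ω))

theorem integrable_of_forall_eq_zero_or_eq_one [IsFiniteMeasure μ] (hT : Measurable T)
    (hTbin : ∀ ω, T ω = 0 ∨ T ω = 1) : Integrable T μ :=
  .of_bound hT.aestronglyMeasurable 1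
    (ae_of_all _ fun ω ↦ abs_le_one_of_eq_zero_or_eq_one (hTbin ω))

theorem setIntegral_inter_preimage_of_eq_zero_or_eq_one (hT : Measurable T)
    (hTbin : ∀ ω, T ω = 0 ∨ T ω = 1) {f : Ω → ℝ} (hf : Integrable f μ) {S : Set Ω} {B : Set ℝ}
    (hB : MeasurableSet B) :
    ∫ ω in S ∩ T ⁻¹' B, f ω ∂μ = B.indicator 1 0 * ∫ ω in S, f ω ∂μ
      + (B.indicator 1 1 - B.indicator 1 0) * ∫ ω in S, (f * T) ω ∂μ := by
  have haffine : (T ⁻¹' B).indicator f = fun ω ↦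
      B.indicator 1 0 * f ω + (B.indicator 1 1 - B.indicator 1 0) * (f * T) ω := by
    ext ω
    rcases hTbin ω with h | h <;> by_cases h0 : (0 : ℝ) ∈ B <;> by_cases h1 : (1 : ℝ) ∈ B <;>
      simp [indicator, h, h0, h1]
  rw [← setIntegral_indicator (hT hB), haffine, integral_add, integral_const_mul,
    integral_const_mul]
  · exact hf.integrableOn.const_mul _
  · exact (integrable_mul_of_eq_zero_or_eq_one hf hT hTbin).integrableOn.const_mul _

end Binary

section Balancing

variable {mG mX m₀ : MeasurableSpace Ω} {μ : Measure Ω} [IsFiniteMeasure μ] {T : Ω → ℝ}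

theorem condExp_mul_ae_eq_mul_condExp_of_aestronglyMeasurable_condExp (hmG : mG ≤ mX)
    (hmX : mX ≤ m₀) (hT : Measurable T) (hTbin : ∀ ω, T ω = 0 ∨ T ω = 1)
    (hprop : AEStronglyMeasurable[mG] (μ[T | mX]) μ) {Z : Ω → ℝ}
    (hZ : StronglyMeasurable[mX] Z) (hZi : Integrable Z μ) :
    μ[Z * T | mG] =ᵐ[μ] μ[Z | mG] * μ[T | mG] := by
  have hTbdd : ∀ᵐ ω ∂μ, |T ω| ≤ 1 :=
    ae_of_all _ fun ω ↦ abs_le_one_of_eq_zero_or_eq_one (hTbin ω)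
  have hTXG : μ[T | mX] =ᵐ[μ] μ[T | mG] :=
    (condExp_of_aestronglyMeasurable' (hmG.trans hmX) hprop integrable_condExp).symm.trans
      (condExp_condExp_of_le hmG hmX)
  have hTGbdd : ∀ᵐ ω ∂μ, ‖μ[T | mG] ω‖ ≤ 1 := ae_bdd_abs_condExp_of_ae_bdd_abs hTbdd
  calc μ[Z * T | mG]
      =ᵐ[μ] μ[μ[Z * T | mX] | mG] := (condExp_condExp_of_le hmG hmX).symm
    _ =ᵐ[μ] μ[Z * μ[T | mX] | mG] := condExp_congr_ae
        (condExp_mul_of_stronglyMeasurable_left hZ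
          (integrable_mul_of_eq_zero_or_eq_one hZi hT hTbin)
          (integrable_of_forall_eq_zero_or_eq_one hT hTbin))
    _ =ᵐ[μ] μ[μ[T | mG] * Z | mG] := condExp_congr_ae <| by
        filter_upwards [hTXG] with ω h
        simp [h, mul_comm]
    _ =ᵐ[μ] μ[T | mG] * μ[Z | mG] :=
        condExp_stronglyMeasurable_mul_of_bound (hmG.trans hmX) stronglyMeasurable_condExp hZi 1
          hTGbdd
    _ = μ[Z | mG] * μ[T | mG] := mul_comm _ _

theorem condExp_sup_comap_ae_eq_of_aestronglyMeasurable_condExp (hmG : mG ≤ mX)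
    (hmX : mX ≤ m₀) (hT : Measurable T) (hTbin : ∀ ω, T ω = 0 ∨ T ω = 1)
    (hprop : AEStronglyMeasurable[mG] (μ[T | mX]) μ) {Z : Ω → ℝ}
    (hZ : StronglyMeasurable[mX] Z) (hZi : Integrable Z μ) :
    μ[Z | mG ⊔ MeasurableSpace.comap T inferInstance] =ᵐ[μ] μ[Z | mG] := by
  have hmG₀ : mG ≤ m₀ := hmG.trans hmX
  have hmGT : mG ⊔ MeasurableSpace.comap T inferInstance ≤ m₀ := sup_le hmG₀ hT.comap_le
  have hW : ∀ S, MeasurableSet[mG] S → ∫ ω in S, μ[Z | mG] ω ∂μ = ∫ ω in S, Z ω ∂μ :=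
    fun S hS ↦ setIntegral_condExp hmG₀ hZi hS
  have hWT : ∀ S, MeasurableSet[mG] S →
      ∫ ω in S, (μ[Z | mG] * T) ω ∂μ = ∫ ω in S, (Z * T) ω ∂μ := by
    intro S hS
    rw [← setIntegral_condExp hmG₀ (integrable_mul_of_eq_zero_or_eq_one hZi hT hTbin) hS,
      ← setIntegral_condExp hmG₀
        (integrable_mul_of_eq_zero_or_eq_one integrable_condExp hT hTbin) hS]
    refine setIntegral_congr_ae (hmG₀ S hS) ?_
    filter_upwards [condExp_mul_of_stronglyMeasurable_left stronglyMeasurable_condExp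
        (integrable_mul_of_eq_zero_or_eq_one integrable_condExp hT hTbin)
        (integrable_of_forall_eq_zero_or_eq_one hT hTbin),
      condExp_mul_ae_eq_mul_condExp_of_aestronglyMeasurable_condExp hmG hmX hT hTbin hprop hZ
        hZi] with ω h₁ h₂ _
    rw [h₁, h₂]
  have hWm : StronglyMeasurable[mG ⊔ MeasurableSpace.comap T inferInstance] (μ[Z | mG]) :=
    stronglyMeasurable_condExp.mono le_sup_left
  refine (ae_eq_condExp_of_forall_setIntegral_eq hmGT hZi
    (fun _ _ _ ↦ integrable_condExp.integrableOn) (fun s hs _ ↦ ?_) hWm.aestronglyMeasurable).symm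
  refine setIntegral_eq_of_isPiSystem hmGT (sup_eq_generateFrom_inter _ _) (isPiSystem_inter _ _)
    integrable_condExp hZi (integral_condExp hmG₀) ?_ hs
  rintro _ ⟨S, _, hS, ⟨B, hB, rfl⟩, rfl⟩
  rw [setIntegral_inter_preimage_of_eq_zero_or_eq_one hT hTbin integrable_condExp hB,
    setIntegral_inter_preimage_of_eq_zero_or_eq_one hT hTbin hZi hB, hW S hS, hWT S hS]

theorem condExp_sup_comap_ae_eq_of_condExp_sup_comap_ae_eq (hmG : mG ≤ mX) (hmX : mX ≤ m₀)
    (hT : Measurable T) (hTbin : ∀ ω, T ω = 0 ∨ T ω = 1)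
    (hprop : AEStronglyMeasurable[mG] (μ[T | mX]) μ) {Y : Ω → ℝ}
    (hig : μ[Y | mX ⊔ MeasurableSpace.comap T inferInstance] =ᵐ[μ] μ[Y | mX]) :
    μ[Y | mG ⊔ MeasurableSpace.comap T inferInstance] =ᵐ[μ] μ[Y | mG] :=
  calc μ[Y | mG ⊔ MeasurableSpace.comap T inferInstance]
      =ᵐ[μ] μ[μ[Y | mX ⊔ MeasurableSpace.comap T inferInstance] |
          mG ⊔ MeasurableSpace.comap T inferInstance] :=
        (condExp_condExp_of_le (sup_le_sup_right hmG _) (sup_le hmX hT.comap_le)).symm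
    _ =ᵐ[μ] μ[μ[Y | mX] | mG ⊔ MeasurableSpace.comap T inferInstance] := condExp_congr_ae hig
    _ =ᵐ[μ] μ[μ[Y | mX] | mG] :=
        condExp_sup_comap_ae_eq_of_aestronglyMeasurable_condExp hmG hmX hT hTbin hprop
          stronglyMeasurable_condExp integrable_condExp
    _ =ᵐ[μ] μ[Y | mG] := condExp_condExp_of_le hmG hmX

end Balancing

theorem MeasureTheory.comp_ae_eq_condExp_comap {𝒳 E : Type*} [MeasurableSpace 𝒳]
    [NormedAddCommGroup E] [NormedSpace ℝ E] [CompleteSpace E] {m₀ : MeasurableSpace Ω}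
    {μ : Measure Ω} [IsFiniteMeasure μ] {X : Ω → 𝒳} (hX : Measurable X) {f : Ω → E}
    {h : 𝒳 → E} (hf : Integrable f μ) (hh : StronglyMeasurable h)
    (hhi : Integrable (fun ω ↦ h (X ω)) μ)
    (heq : ∀ A, MeasurableSet A → ∫ ω in X ⁻¹' A, f ω ∂μ = ∫ ω in X ⁻¹' A, h (X ω) ∂μ) :
    (fun ω ↦ h (X ω)) =ᵐ[μ] μ[f | MeasurableSpace.comap X inferInstance] := by
  refine ae_eq_condExp_of_forall_setIntegral_eq hX.comap_le hf (fun _ _ _ ↦ hhi.integrableOn)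
    ?_ (hh.comp_measurable (comap_measurable X)).aestronglyMeasurable
  rintro _ ⟨A, hA, rfl⟩ -
  exact (heq A hA).symm

end

theorem ignorability_transfers_to_propensity_general
    {Ω 𝒳 : Type*} [m0 : MeasurableSpace Ω] [MeasurableSpace 𝒳]
    (μ : Measure Ω) [IsProbabilityMeasure μ]
    (X : Ω → 𝒳) (T : Ω → ℝ) (Y1 Y0 : Ω → ℝ)
    (hX : Measurable X) (hT : Measurable T)
    (hTbin : ∀ ω, T ω = 0 ∨ T ω = 1)
    (g : 𝒳 → ℝ) (hgm : Measurable g)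
    (hg : ∀ A : Set 𝒳, MeasurableSet A →
      ∫ ω in X ⁻¹' A, T ω ∂μ = ∫ ω in X ⁻¹' A, g (X ω) ∂μ)
    (hover : ∀ᵐ ω ∂μ, 0 < g (X ω) ∧ g (X ω) < 1)
    -- mean ignorability given X: E[Y(t) | X, T] = E[Y(t) | X]
    (hig1 : μ[Y1 | MeasurableSpace.comap (fun ω => (X ω, T ω)) inferInstance]
        =ᵐ[μ] μ[Y1 | MeasurableSpace.comap X inferInstance])
    (hig0 : μ[Y0 | MeasurableSpace.comap (fun ω => (X ω, T ω)) inferInstance]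
        =ᵐ[μ] μ[Y0 | MeasurableSpace.comap X inferInstance]) :
    (μ[Y1 | MeasurableSpace.comap (fun ω => (g (X ω), T ω)) inferInstance]
        =ᵐ[μ] μ[Y1 | MeasurableSpace.comap (fun ω => g (X ω)) inferInstance]) ∧
    (μ[Y0 | MeasurableSpace.comap (fun ω => (g (X ω), T ω)) inferInstance]
        =ᵐ[μ] μ[Y0 | MeasurableSpace.comap (fun ω => g (X ω)) inferInstance]) := by
  have hgX : Measurable[MeasurableSpace.comap X inferInstance] fun ω ↦ g (X ω) :=
    hgm.comp (comap_measurable X)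
  have hgXi : Integrable (fun ω ↦ g (X ω)) μ := by
    refine .of_bound (hgm.comp hX).aestronglyMeasurable 1 ?_
    filter_upwards [hover] with ω h
    exact abs_le.2 ⟨by linarith [h.1], h.2.le⟩
  have hprop : AEStronglyMeasurable[MeasurableSpace.comap (fun ω ↦ g (X ω)) inferInstance]
      (μ[T | MeasurableSpace.comap X inferInstance]) μ :=
    (comap_measurable _).aestronglyMeasurable.congr <| comp_ae_eq_condExp_comap hX
      (integrable_of_forall_eq_zero_or_eq_one hT hTbin) hgm.stronglyMeasurable hgXi hg
  -- `inferInstance` on a product is `MeasurableSpace.prod` only up to unfolding, hence `erw`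
  erw [MeasurableSpace.comap_prodMk] at hig1 hig0 ⊢
  exact ⟨condExp_sup_comap_ae_eq_of_condExp_sup_comap_ae_eq hgX.comap_le hX.comap_le hT hTbin
      hprop hig1,
    condExp_sup_comap_ae_eq_of_condExp_sup_comap_ae_eq hgX.comap_le hX.comap_le hT hTbin
      hprop hig0⟩

/-- conditional (mean) ignorability given X implies conditional (mean)
ignorability given the propensity score g(X). -/
theorem ignorability_transfers_to_propensity
    {Ω 𝒳 : Type*} [m0 : MeasurableSpace Ω] [MeasurableSpace 𝒳]
    (μ : Measure Ω) [IsProbabilityMeasure μ]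
    (X : Ω → 𝒳) (T : Ω → ℝ) (Y1 Y0 : Ω → ℝ)
    (hX : Measurable X) (hT : Measurable T)
    (hY1 : Integrable Y1 μ) (hY0 : Integrable Y0 μ)
    (hTbin : ∀ ω, T ω = 0 ∨ T ω = 1)
    (g : 𝒳 → ℝ) (hgm : Measurable g)
    (hg : ∀ A : Set 𝒳, MeasurableSet A →
      ∫ ω in X ⁻¹' A, T ω ∂μ = ∫ ω in X ⁻¹' A, g (X ω) ∂μ)
    (hover : ∀ᵐ ω ∂μ, 0 < g (X ω) ∧ g (X ω) < 1)
    -- mean ignorability given X: E[Y(t) | X, T] = E[Y(t) | X]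
    (hig1 : μ[Y1 | MeasurableSpace.comap (fun ω => (X ω, T ω)) inferInstance]
        =ᵐ[μ] μ[Y1 | MeasurableSpace.comap X inferInstance])
    (hig0 : μ[Y0 | MeasurableSpace.comap (fun ω => (X ω, T ω)) inferInstance]
        =ᵐ[μ] μ[Y0 | MeasurableSpace.comap X inferInstance]) :
    (μ[Y1 | MeasurableSpace.comap (fun ω => (g (X ω), T ω)) inferInstance]
        =ᵐ[μ] μ[Y1 | MeasurableSpace.comap (fun ω => g (X ω)) inferInstance]) ∧
    (μ[Y0 | MeasurableSpace.comap (fun ω => (g (X ω), T ω)) inferInstance]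
        =ᵐ[μ] μ[Y0 | MeasurableSpace.comap (fun ω => g (X ω)) inferInstance]) :=
  ignorability_transfers_to_propensity_general (m0 := m0) μ X T Y1 Y0 hX hT hTbin g hgm hg hover
    hig1 hig0
end
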